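/- The map ψ takes values in μ⁻¹(0): for every (z,w) ∈ ℂ^p × ℂ^q one has μ(ψ(z,w)) = 0; in fact, for z ≠ 0 and w ≠ 0, writing ψ(z,w) = (z̃, w̃), one has |z̃|²_a = |w̃|²_b = √(|z|²_a · |w|²_b). Moreover ψ fixes every point of μ⁻¹(0) \ {(0,0)} (i.e. ψ(z,w) = (z,w) whenever μ(z,w) = 0 and (z,w) ≠ (0,0)), so the image of ψ is exactly μ⁻¹(0). -/

import Mathlib

/-- The weighted square norm `|z|²_c = ∑ c_j |z_j|²` on `ℂ^n`. -/
noncomputable def wnorm {n : ℕ} (c : Fin n → ℕ) (z : Fin n → ℂ) : ℝ :=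
  ∑ j, (c j : ℝ) * ‖z j‖ ^ 2

/-- The function `μ(z,w) = |z|²_a − |w|²_b` on `ℂ^p × ℂ^q`. -/
noncomputable def mu {p q : ℕ} (a : Fin p → ℕ) (b : Fin q → ℕ)
    (x : (Fin p → ℂ) × (Fin q → ℂ)) : ℝ :=
  wnorm a x.1 - wnorm b x.2

open Classical in
/-- The blow-down map
`ψ(z,w) = ((|w|²_b/|z|²_a)^{1/4}·z, (|z|²_a/|w|²_b)^{1/4}·w)` for `z ≠ 0` and
`w ≠ 0`, and `ψ(z,w) = (0,0)` if `z = 0` or `w = 0`. -/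
noncomputable def psi {p q : ℕ} (a : Fin p → ℕ) (b : Fin q → ℕ)
    (x : (Fin p → ℂ) × (Fin q → ℂ)) : (Fin p → ℂ) × (Fin q → ℂ) :=
  if x.1 ≠ 0 ∧ x.2 ≠ 0 then
    (((wnorm b x.2 / wnorm a x.1) ^ ((1 : ℝ) / 4)) • x.1,
     ((wnorm a x.1 / wnorm b x.2) ^ ((1 : ℝ) / 4)) • x.2)
  else (0, 0)

lemma wnorm_nonneg {n : ℕ} (c : Fin n → ℕ) (z : Fin n → ℂ) : 0 ≤ wnorm c z :=
  Finset.sum_nonneg fun j _ => mul_nonneg (Nat.cast_nonneg _) (sq_nonneg _)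

lemma wnorm_pos {n : ℕ} {c : Fin n → ℕ} (hc : ∀ j, 0 < c j) {z : Fin n → ℂ}
    (hz : z ≠ 0) : 0 < wnorm c z := by
  obtain ⟨j, hj⟩ : ∃ j, z j ≠ 0 := by
    by_contra h
    push_neg at h
    exact hz (funext h)
  refine Finset.sum_pos' (fun i _ => mul_nonneg (Nat.cast_nonneg _) (sq_nonneg _))
    ⟨j, Finset.mem_univ j, ?_⟩
  exact mul_pos (by exact_mod_cast hc j) (pow_pos (norm_pos_iff.mpr hj) 2)

lemma wnorm_smul {n : ℕ} (c : Fin n → ℕ) (t : ℝ) (ht : 0 ≤ t) (z : Fin n → ℂ) :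
    wnorm c (t • z) = t ^ 2 * wnorm c z := by
  unfold wnorm
  rw [Finset.mul_sum]
  refine Finset.sum_congr rfl fun j _ => ?_
  have : ‖(t • z) j‖ = t * ‖z j‖ := by
    simp [norm_smul, abs_of_nonneg ht]
  rw [this]
  ring

lemma psi_key {p q : ℕ} {a : Fin p → ℕ} {b : Fin q → ℕ}
    (ha : ∀ j, 0 < a j) (hb : ∀ j, 0 < b j)
    (x : (Fin p → ℂ) × (Fin q → ℂ)) (h1 : x.1 ≠ 0) (h2 : x.2 ≠ 0) :
    wnorm a (psi a b x).1 = Real.sqrt (wnorm a x.1 * wnorm b x.2) ∧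
    wnorm b (psi a b x).2 = Real.sqrt (wnorm a x.1 * wnorm b x.2) := by
  have hA := wnorm_pos ha h1
  have hB := wnorm_pos hb h2
  set A := wnorm a x.1 with hAdef
  set B := wnorm b x.2 with hBdef
  have hpsi : psi a b x =
      (((B / A) ^ ((1 : ℝ) / 4)) • x.1, ((A / B) ^ ((1 : ℝ) / 4)) • x.2) := by
    rw [psi, if_pos ⟨h1, h2⟩]
  have key : ∀ (C D : ℝ), 0 < C → 0 < D →
      ((D / C) ^ ((1 : ℝ) / 4)) ^ 2 * C = Real.sqrt (C * D) := by
    intro C D hC hD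
    have h4 : ((D / C) ^ ((1 : ℝ) / 4)) ^ 2 = (D / C) ^ ((1 : ℝ) / 2) := by
      rw [← Real.rpow_natCast ((D / C) ^ ((1 : ℝ) / 4)) 2,
        ← Real.rpow_mul (le_of_lt (div_pos hD hC))]
      norm_num
    rw [h4, ← Real.sqrt_eq_rpow]
    have hC2 : C = Real.sqrt (C ^ 2) := (Real.sqrt_sq hC.le).symm
    rw [hC2, ← Real.sqrt_mul (by positivity)]
    congr 1
    field_simp
    ring_nf
    rw [Real.sq_sqrt (by positivity)]
  constructor
  · rw [hpsi]
    simp only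
    rw [wnorm_smul a _ (Real.rpow_nonneg (le_of_lt (div_pos hB hA)) _), ← hAdef]
    exact key A B hA hB
  · rw [hpsi]
    simp only
    rw [wnorm_smul b _ (Real.rpow_nonneg (le_of_lt (div_pos hA hB)) _), ← hBdef]
    rw [mul_comm A B]
    exact key B A hB hA

/-- `ψ` takes values in `μ⁻¹(0)`, with
`|ψ₁(z,w)|²_a = |ψ₂(z,w)|²_b = √(|z|²_a·|w|²_b)` for `z ≠ 0 ≠ w`; `ψ` fixes every
point of `μ⁻¹(0) \ {(0,0)}`, and the image of `ψ` is exactly `μ⁻¹(0)`. -/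
theorem stmt_10 {p q : ℕ} (hp : 1 ≤ p) (hq : 1 ≤ q)
    (a : Fin p → ℕ) (b : Fin q → ℕ) (ha : ∀ j, 0 < a j) (hb : ∀ j, 0 < b j) :
    (∀ x : (Fin p → ℂ) × (Fin q → ℂ), mu a b (psi a b x) = 0) ∧
    (∀ x : (Fin p → ℂ) × (Fin q → ℂ), x.1 ≠ 0 → x.2 ≠ 0 →
      wnorm a (psi a b x).1 = Real.sqrt (wnorm a x.1 * wnorm b x.2) ∧
      wnorm b (psi a b x).2 = Real.sqrt (wnorm a x.1 * wnorm b x.2)) ∧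
    (∀ x : (Fin p → ℂ) × (Fin q → ℂ), mu a b x = 0 → x ≠ (0, 0) → psi a b x = x) ∧
    Set.range (psi a b) = mu a b ⁻¹' {0} := by
  have hpsi0 : ∀ x : (Fin p → ℂ) × (Fin q → ℂ), x.1 = 0 ∨ x.2 = 0 →
      psi a b x = (0, 0) := by
    intro x hx
    rw [psi, if_neg]
    tauto
  have hmu1 : ∀ x : (Fin p → ℂ) × (Fin q → ℂ), mu a b (psi a b x) = 0 := by
    intro x
    by_cases h : x.1 ≠ 0 ∧ x.2 ≠ 0
    · obtain ⟨hw1, hw2⟩ := psi_key ha hb x h.1 h.2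
      rw [mu, hw1, hw2, sub_self]
    · rw [hpsi0 x (by tauto), mu]
      simp [wnorm]
  have hfix : ∀ x : (Fin p → ℂ) × (Fin q → ℂ), mu a b x = 0 → x ≠ (0, 0) →
      psi a b x = x := by
    intro x hmu hx
    have hAB : wnorm a x.1 = wnorm b x.2 := by
      have := hmu
      rw [mu, sub_eq_zero] at this
      exact this
    have h1 : x.1 ≠ 0 := by
      intro h1
      have : wnorm a x.1 = 0 := by simp [wnorm, h1]
      have hB0 : wnorm b x.2 = 0 := by rw [← hAB, this]
      have h2 : x.2 = 0 := by
        by_contra h2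
        exact absurd hB0 (ne_of_gt (wnorm_pos hb h2))
      exact hx (Prod.ext h1 h2)
    have h2 : x.2 ≠ 0 := by
      intro h2
      have : wnorm b x.2 = 0 := by simp [wnorm, h2]
      have hA0 : wnorm a x.1 = 0 := by rw [hAB, this]
      exact absurd hA0 (ne_of_gt (wnorm_pos ha h1))
    rw [psi, if_pos ⟨h1, h2⟩, hAB]
    have hB := wnorm_pos hb h2
    rw [div_self (ne_of_gt hB), Real.one_rpow]
    simp
  refine ⟨hmu1, fun x hx1 hx2 => psi_key ha hb x hx1 hx2, hfix, ?_⟩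
  ext x
  simp only [Set.mem_range, Set.mem_preimage, Set.mem_singleton_iff]
  constructor
  · rintro ⟨y, rfl⟩
    exact hmu1 y
  · intro hx
    by_cases h0 : x = (0, 0)
    · exact ⟨(0, 0), by rw [hpsi0 (0,0) (Or.inl rfl), h0]⟩
    · exact ⟨x, hfix x hx h0⟩
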